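/- Let N ∈ ℕ, let F be a nonempty skew finite subset of ℓ1^N with m := |F|, let w = (w_p)_{p∈F} be the weighting of F, and for r ∈ (0, skew(F)/2) let (α_{p,s}(r))_{p∈F, s∈{−1,1}^N} be the unique solution of the Vertex System. Then for every p ∈ F, lim_{r↘0} Σ_{s∈{−1,1}^N} α_{p,s}(r) = 1 − w_p; consequently lim_{r↘0} Σ_{p∈F, s∈{−1,1}^N} α_{p,s}(r) = m − mg(F). -/

import Mathlib

open Metric Set Filter Topology
open scoped ENNReal Classical

/-- The 1-metric on `ℝ^N`. -/
noncomputable def d1 {N : ℕ} (x y : Fin N → ℝ) : ℝ := ∑ k, |x k - y k|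

/-- The infimum of 1-distances from points of `A` to `y`. -/
noncomputable def d1Inf {N : ℕ} (A : Set (Fin N → ℝ)) (y : Fin N → ℝ) : ℝ :=
  sInf ((fun z => d1 z y) '' A)

/-- The skewness of a set `S ⊆ ℝ^N`. -/
noncomputable def skewness {N : ℕ} (S : Set (Fin N → ℝ)) : ℝ≥0∞ :=
  ⨅ (a : S) (b : S) (_ : a ≠ b) (k : Fin N), ENNReal.ofReal |a.1 k - b.1 k|

/-- A set is skew when its skewness is positive. -/
def IsSkew {N : ℕ} (S : Set (Fin N → ℝ)) : Prop := 0 < skewness S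

/-- The closed cube with center `p` and "radius" `r`. -/
def cube {N : ℕ} (p : Fin N → ℝ) (r : ℝ) : Set (Fin N → ℝ) :=
  {x | ∀ k, x k ∈ Set.Icc (p k - r) (p k + r)}

/-- The sign vector associated to `s : Fin N → Bool` (`true ↦ 1`, `false ↦ -1`). -/
def sgnVec {N : ℕ} (s : Fin N → Bool) : Fin N → ℝ := fun k => if s k then 1 else -1

/-- The Vertex System. -/
def VertexSystem {N : ℕ} (F : Finset (Fin N → ℝ)) (r : ℝ)
    (x : (Fin N → ℝ) → (Fin N → Bool) → ℝ) : Prop :=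
  ∀ q ∈ F, ∀ t : Fin N → Bool,
    (∑ p ∈ F, ∑ s : Fin N → Bool,
        x p s * Real.exp (-d1 (p + r • sgnVec s) (q + r • sgnVec t))) =
      ∑ p ∈ F.erase q, Real.exp (-d1Inf (cube p r) (q + r • sgnVec t))

/-!
For `r < skew(F) / 2` every distance between vertices of different cubes, and from a cube to a
vertex of another cube, is affine in `r`, with slopes given by the sign patterns
`sign (p - q)`. The kernel `exp (-d1)` on the vertices of one cube is invertible, so the Vertex
System forces `α q` to live on the vertices of the cube at `q` pointing towards the other
points of `F`. The weighted masses `A(p, q) = ∑ₛ exp (-r ⟨sign (p - q), s⟩) α_{p,s}` then solve a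
square linear system `(1 + C r) A = b r` with coefficients continuous in `r`. At `r = 0` it is
solved by `A(q, q') = 1 - w q` (the weighting equations), and it is nonsingular because
`exp (-d1)` is positive definite on a skew set: it is a Hadamard product of Laplace kernels
`exp (-|x - y|)`, each positive definite by a triangular Gram factorisation. Hence
`A(p, p) = ∑ₛ α_{p,s}` tends to `1 - w p`.
-/

open Matrix

noncomputable def predIn (s : Finset ℝ) (t : ℝ) : ℝ :=
  (insert 0 (s.filter (· < t))).max' (Finset.insert_nonempty _ _)

lemma predIn_lt {s : Finset ℝ} {t : ℝ} (ht : 0 < t) : predIn s t < t :=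
  (Finset.max'_lt_iff _ _).2 fun u hu => by
    rcases Finset.mem_insert.1 hu with rfl | hu
    · exact ht
    · exact (Finset.mem_filter.1 hu).2

lemma sum_sub_predIn {s : Finset ℝ} (hs : ∀ t ∈ s, 0 < t) :
    ∑ t ∈ s, (t - predIn s t) = (insert 0 s).max' (Finset.insert_nonempty _ _) := by
  induction s using Finset.induction_on_max with
  | empty => simp [predIn]
  | insert a s hlt ih =>
    have ha : 0 < a := hs a (Finset.mem_insert_self a s)
    have hpred : ∀ t ∈ s, predIn (insert a s) t = predIn s t := fun t ht => by
      simp only [predIn, Finset.filter_insert, if_neg (hlt t ht).not_gt]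
    have hmax : (insert 0 (insert a s)).max' (Finset.insert_nonempty _ _) = a :=
      le_antisymm ((Finset.max'_le_iff _ _).2 fun u hu => by
        simp only [Finset.mem_insert] at hu
        rcases hu with rfl | rfl | hu
        exacts [ha.le, le_rfl, (hlt u hu).le]) (Finset.le_max' _ _ (by simp))
    have hnot : a ∉ s := fun h => (hlt a h).false
    rw [Finset.sum_insert hnot, Finset.sum_congr rfl fun t ht => by rw [hpred t ht],
      ih fun t ht => hs t (Finset.mem_insert_of_mem ht), hmax]
    simp only [predIn, Finset.filter_insert, lt_self_iff_false, if_false,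
      Finset.filter_true_of_mem hlt]
    ring

lemma sum_filter_le_sub_predIn {s : Finset ℝ} (hs : ∀ t ∈ s, 0 < t) {c : ℝ} (hc : c ∈ s) :
    ∑ t ∈ s with t ≤ c, (t - predIn s t) = c := by
  have hpred : ∀ t ∈ s.filter (· ≤ c), predIn (s.filter (· ≤ c)) t = predIn s t :=
    fun t ht => by
      simp only [predIn, Finset.filter_filter]
      congr 2
      exact Finset.filter_congr fun u _ => ⟨fun h => h.2, fun h =>
        ⟨h.le.trans (Finset.mem_filter.1 ht).2, h⟩⟩
  rw [Finset.sum_congr rfl fun t ht => by rw [← hpred t ht],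
    sum_sub_predIn fun t ht => hs t (Finset.mem_filter.1 ht).1]
  exact le_antisymm ((Finset.max'_le_iff _ _).2 fun u hu => by
      simp only [Finset.mem_insert, Finset.mem_filter] at hu
      rcases hu with rfl | hu
      exacts [(hs c hc).le, hu.2])
    (Finset.le_max' _ _ (by simp [hc]))

lemma exp_neg_abs_sub (a b : ℝ) :
    Real.exp (-|a - b|) =
      Real.exp (-a) * Real.exp (-b) * min (Real.exp (2 * a)) (Real.exp (2 * b)) := by
  rw [← Real.exp_monotone.map_min, ← Real.exp_add, ← Real.exp_add]
  congr 1
  rcases le_total a b with h | h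
  · rw [abs_of_nonpos (by linarith), min_eq_left (by linarith)]; ring
  · rw [abs_of_nonneg (by linarith), min_eq_right (by linarith)]; ring

/- Gram factorisation: with `a = exp (2 x)`, the entry is `exp (-x i) exp (-x j) min (a i) (a j)`,
and `min (a i) (a j)` is the sum of the gaps `t - predIn s t` over the `t ∈ s = a '' ι` below both.
The factor is triangular in the order of `a`, hence injective. -/
theorem posDef_exp_neg_abs_sub {ι : Type*} [Fintype ι] {x : ι → ℝ} (hx : Function.Injective x) :
    (of fun i j => Real.exp (-|x i - x j|)).PosDef := by
  set a : ι → ℝ := fun i => Real.exp (2 * x i)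
  have ha : Function.Injective a := fun i j h => hx <| by
    simpa using Real.exp_injective h
  set s := Finset.univ.image a
  have hs : ∀ t ∈ s, 0 < t := by
    intro t ht
    obtain ⟨i, -, rfl⟩ := Finset.mem_image.1 ht
    exact Real.exp_pos _
  let G : Matrix s ι ℝ := of fun t i =>
    Real.exp (-x i) * if (t : ℝ) ≤ a i then √((t : ℝ) - predIn s t) else 0
  have hG : (of fun i j => Real.exp (-|x i - x j|)) = Gᴴ * G := by
    ext i j
    have hterm : ∀ t : s, Gᴴ i t * G t j = Real.exp (-x i) * Real.exp (-x j) *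
        if (t : ℝ) ≤ min (a i) (a j) then (t : ℝ) - predIn s t else 0 := fun t => by
      have hg := Real.mul_self_sqrt (sub_pos.2 (predIn_lt (s := s) (hs t t.2))).le
      simp only [G, conjTranspose_apply, of_apply, star_trivial, le_min_iff]
      by_cases hi : (t : ℝ) ≤ a i <;> by_cases hj : (t : ℝ) ≤ a j <;> simp only [hi, hj,
        if_true, if_false, and_self, and_false, false_and, mul_zero, zero_mul]
      linear_combination Real.exp (-x i) * Real.exp (-x j) * hg
    rw [of_apply, mul_apply, Fintype.sum_congr _ _ hterm, ← Finset.mul_sum,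
      Finset.sum_coe_sort s fun t => if t ≤ min (a i) (a j) then t - predIn s t else 0,
      ← Finset.sum_filter, sum_filter_le_sub_predIn hs, exp_neg_abs_sub]
    rcases min_choice (a i) (a j) with h | h <;> rw [h] <;>
      exact Finset.mem_image_of_mem a (Finset.mem_univ _)
  rw [hG]
  refine PosDef.conjTranspose_mul_self G ((injective_iff_map_eq_zero G.mulVecLin).2 fun c hc => ?_)
  by_contra hne
  obtain ⟨m, hm, hmax⟩ := (Finset.univ.filter (c · ≠ 0)).exists_max_image a <| by
    obtain ⟨i, hi⟩ := Function.ne_iff.1 hne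
    exact ⟨i, by simpa using hi⟩
  have hcm : c m ≠ 0 := (Finset.mem_filter.1 hm).2
  set tm : s := ⟨a m, Finset.mem_image_of_mem a (Finset.mem_univ m)⟩
  have htm : (tm : ℝ) = a m := rfl
  have hrow := congrFun hc tm
  rw [mulVecLin_apply, mulVec, dotProduct, Finset.sum_eq_single m] at hrow
  · have hGm : 0 < G tm m := by
      simp only [G, of_apply, htm, le_refl, if_true]
      exact mul_pos (Real.exp_pos _) (Real.sqrt_pos.2 (sub_pos.2 (predIn_lt (Real.exp_pos _))))
    exact hcm ((mul_eq_zero.1 hrow).resolve_left hGm.ne')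
  · intro i _ him
    by_cases hci : c i = 0
    · rw [hci, mul_zero]
    have hlt : a i < a m := (hmax i (by simpa using hci)).lt_of_ne (ha.ne him)
    simp [G, htm, hlt.not_ge]
  · simp

theorem posDef_exp_neg_sum_abs_sub {κ ι : Type*} [Fintype κ] [Nonempty κ] [Fintype ι]
    {x : κ → ι → ℝ} (hx : ∀ k, Function.Injective (x k)) :
    (of fun i j => Real.exp (-∑ k, |x k i - x k j|)).PosDef := by
  suffices ∀ S : Finset κ, S.Nonempty →
      (of fun i j => Real.exp (-∑ k ∈ S, |x k i - x k j|)).PosDef from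
    this _ Finset.univ_nonempty
  intro S hS
  induction hS using Finset.Nonempty.cons_induction with
  | singleton k => simpa using posDef_exp_neg_abs_sub (hx k)
  | cons k S hk _ ih =>
    have hsplit : (of fun i j => Real.exp (-∑ l ∈ S.cons k hk, |x l i - x l j|)) =
        (of fun i j => Real.exp (-|x k i - x k j|)) ⊙
          of fun i j => Real.exp (-∑ l ∈ S, |x l i - x l j|) := by
      ext i j
      rw [hadamard_apply, of_apply, of_apply, of_apply, Finset.sum_cons, neg_add, Real.exp_add]
    rw [hsplit]
    exact (posDef_exp_neg_abs_sub (hx k)).hadamard ih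

theorem Matrix.tendsto_of_mulVec_eq {α n 𝕜 : Type*} [Fintype n] [DecidableEq n] [Field 𝕜]
    [TopologicalSpace 𝕜] [IsTopologicalDivisionRing 𝕜] [T1Space 𝕜] {l : Filter α}
    {M : α → Matrix n n 𝕜} {b x : α → n → 𝕜} {M₀ : Matrix n n 𝕜} {b₀ x₀ : n → 𝕜}
    (hM : Tendsto M l (𝓝 M₀)) (hb : Tendsto b l (𝓝 b₀)) (hM₀ : IsUnit M₀)
    (h₀ : M₀ *ᵥ x₀ = b₀) (hx : ∀ᶠ a in l, M a *ᵥ x a = b a) : Tendsto x l (𝓝 x₀) := by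
  have hdet : M₀.det ≠ 0 := ((isUnit_iff_isUnit_det M₀).1 hM₀).ne_zero
  have hdet_inv : ContinuousAt Ring.inverse M₀.det := by
    rw [Ring.inverse_eq_inv']
    exact continuousAt_inv₀ hdet
  have hinv : Tendsto (fun a => (M a)⁻¹) l (𝓝 M₀⁻¹) :=
    (continuousAt_matrix_inv M₀ hdet_inv).tendsto.comp hM
  have hunit : ∀ᶠ a in l, IsUnit (M a) := by
    filter_upwards [((continuous_id.matrix_det.tendsto M₀).comp hM).eventually_ne hdet] with a ha
    exact (isUnit_iff_isUnit_det _).2 (Ne.isUnit ha)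
  have hlim : Tendsto (fun a => (M a)⁻¹ *ᵥ b a) l (𝓝 x₀) := by
    have hx₀ : x₀ = M₀⁻¹ *ᵥ b₀ := by
      rw [← h₀, mulVec_mulVec, nonsing_inv_mul _ ((isUnit_iff_isUnit_det M₀).1 hM₀), one_mulVec]
    rw [hx₀]
    exact ((continuous_fst.matrix_mulVec continuous_snd).tendsto _).comp (hinv.prodMk_nhds hb)
  refine hlim.congr' ?_
  filter_upwards [hunit, hx] with a ha hxa
  rw [← hxa, mulVec_mulVec, nonsing_inv_mul _ ((isUnit_iff_isUnit_det _).1 ha), one_mulVec]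

lemma Finset.sum_erase_eq_sum_univ_erase {α M : Type*} [DecidableEq α] [AddCommGroup M]
    {F : Finset α} (q : F) (g : α → M) : ∑ p ∈ F.erase q, g p = ∑ p ∈ Finset.univ.erase q, g p := by
  rw [Finset.sum_erase_eq_sub q.2, Finset.sum_erase_eq_sub (Finset.mem_univ q),
    Finset.sum_coe_sort F g]

section CubeKernel

variable {ι R : Type*} [Fintype ι]

def cubeKernel [CommRing R] (ρ : R) : Matrix (ι → Bool) (ι → Bool) R :=
  of fun s t => ∏ k, if s k = t k then 1 else ρ

lemma cubeKernel_mul_cubeKernel_neg [DecidableEq ι] [CommRing R] (ρ : R) :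
    cubeKernel (ι := ι) ρ * cubeKernel (-ρ) = (1 - ρ ^ 2) ^ Fintype.card ι • 1 := by
  ext s u
  have hcoord : ∀ k, ∑ b, (if s k = b then 1 else ρ) * (if b = u k then 1 else -ρ) =
      if s k = u k then 1 - ρ ^ 2 else 0 := fun k => by
    rw [Fintype.sum_bool]
    cases s k <;> cases u k <;> simp <;> ring
  simp only [mul_apply, cubeKernel, of_apply, ← Finset.prod_mul_distrib]
  rw [← Fintype.prod_sum fun k b => (if s k = b then 1 else ρ) * (if b = u k then 1 else -ρ)]
  simp only [hcoord, Matrix.smul_apply, one_apply, smul_eq_mul]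
  by_cases h : s = u
  · simp [h, Finset.prod_const]
  · obtain ⟨k, hk⟩ := Function.ne_iff.1 h
    rw [Finset.prod_eq_zero (Finset.mem_univ k) (if_neg hk), if_neg h, mul_zero]

lemma vecMul_cubeKernel_injective [DecidableEq ι] [Field R] {ρ : R} (hρ : ρ ^ 2 ≠ 1) :
    Function.Injective fun v : (ι → Bool) → R => v ᵥ* cubeKernel ρ := by
  intro u v h
  have h' := congrArg (· ᵥ* cubeKernel (-ρ)) h
  simp only [vecMul_vecMul, cubeKernel_mul_cubeKernel_neg, vecMul_smul, vecMul_one] at h'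
  exact smul_right_injective _ (pow_ne_zero _ (sub_ne_zero.2 hρ.symm)) h'

end CubeKernel

lemma d1_comm {N : ℕ} (p q : Fin N → ℝ) : d1 p q = d1 q p := by
  simp only [d1, abs_sub_comm]

lemma d1_self {N : ℕ} (p : Fin N → ℝ) : d1 p p = 0 := by
  simp [d1]

theorem posDef_exp_neg_d1 {N : ℕ} {F : Finset (Fin N → ℝ)}
    (hF : ∀ k, Function.Injective fun p : F => (p : Fin N → ℝ) k) :
    (of fun p q : F => Real.exp (-d1 (p : Fin N → ℝ) q)).PosDef := by
  rcases isEmpty_or_nonempty (Fin N) with hN | hN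
  · convert PosDef.one (n := F) (R := ℝ)
    ext p q
    rw [Subsingleton.elim p q]
    simp [d1]
  · exact posDef_exp_neg_sum_abs_sub hF

lemma lt_abs_sub_of_ofReal_lt_skewness {N : ℕ} {S : Set (Fin N → ℝ)} {c : ℝ}
    (h : ENNReal.ofReal c < skewness S) {p q : Fin N → ℝ} (hp : p ∈ S) (hq : q ∈ S)
    (hpq : p ≠ q) (k : Fin N) : c < |p k - q k| := by
  have hle : skewness S ≤ ENNReal.ofReal |p k - q k| :=
    (iInf_le _ ⟨p, hp⟩).trans <| (iInf_le _ ⟨q, hq⟩).trans <|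
      (iInf_le _ fun h => hpq (congrArg Subtype.val h)).trans (iInf_le _ k)
  by_contra hc
  exact (h.trans_le hle).not_ge (ENNReal.ofReal_le_ofReal (not_lt.1 hc))

lemma apply_ne_of_ofReal_lt_skewness {N : ℕ} {S : Set (Fin N → ℝ)} {c : ℝ}
    (h : ENNReal.ofReal c < skewness S) {p q : Fin N → ℝ} (hp : p ∈ S) (hq : q ∈ S)
    (hpq : p ≠ q) (k : Fin N) : p k ≠ q k := by
  have h0 : ENNReal.ofReal 0 < skewness S := lt_of_le_of_lt (by simp) h
  exact sub_ne_zero.1 (abs_pos.1 (lt_abs_sub_of_ofReal_lt_skewness h0 hp hq hpq k))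

lemma IsSkew.injective_apply {N : ℕ} {F : Finset (Fin N → ℝ)}
    (hskew : IsSkew (F : Set (Fin N → ℝ))) (k : Fin N) :
    Function.Injective fun p : F => (p : Fin N → ℝ) k := fun p q h => by
  have hskew₀ : ENNReal.ofReal 0 < skewness (F : Set (Fin N → ℝ)) := by
    rw [ENNReal.ofReal_zero]
    exact hskew
  by_contra hpq
  exact apply_ne_of_ofReal_lt_skewness hskew₀ p.2 q.2 (Subtype.coe_ne_coe.2 hpq) k h

lemma eventually_pos_and_ofReal_two_mul_lt {c : ℝ≥0∞} (hc : 0 < c) :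
    ∀ᶠ r in 𝓝[>] (0 : ℝ), 0 < r ∧ ENNReal.ofReal (2 * r) < c := by
  refine eventually_nhdsWithin_of_forall (fun r hr => hr) |>.and ?_
  have h2r : Tendsto (fun r : ℝ => ENNReal.ofReal (2 * r)) (𝓝 0) (𝓝 (ENNReal.ofReal (2 * 0))) :=
    (ENNReal.continuous_ofReal.comp (continuous_const_mul 2)).tendsto 0
  rw [mul_zero, ENNReal.ofReal_zero] at h2r
  exact nhdsWithin_le_nhds (h2r.eventually_lt_const hc)

lemma cubeKernel_exp {N : ℕ} (r : ℝ) (s t : Fin N → Bool) :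
    cubeKernel (Real.exp (-(2 * r))) s t = Real.exp (-(N * r - r * (sgnVec s ⬝ᵥ sgnVec t))) := by
  have hsum : N * r - r * (sgnVec s ⬝ᵥ sgnVec t) = ∑ k, (r - r * (sgnVec s k * sgnVec t k)) := by
    simp [dotProduct, Finset.sum_sub_distrib, Finset.mul_sum]
  rw [hsum, ← Finset.sum_neg_distrib, Real.exp_sum, cubeKernel, of_apply]
  refine Finset.prod_congr rfl fun k _ => ?_
  simp only [sgnVec]
  cases s k <;> cases t k <;> norm_num <;> ring_nf

section CubeGeometry

variable {N : ℕ}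

noncomputable def signDiff (p q : Fin N → ℝ) : Fin N → ℝ := fun k => Real.sign (p k - q k)

noncomputable def towards (p q : Fin N → ℝ) : Fin N → Bool := fun k => decide (q k < p k)

lemma sgnVec_towards {p q : Fin N → ℝ} (h : ∀ k, p k ≠ q k) :
    sgnVec (towards p q) = signDiff p q := by
  ext k
  rcases (h k).lt_or_gt with hk | hk
  · simp [sgnVec, towards, signDiff, hk.not_gt, Real.sign_of_neg (sub_neg.2 hk)]
  · simp [sgnVec, towards, signDiff, hk, Real.sign_of_pos (sub_pos.2 hk)]

lemma abs_sgnVec (s : Fin N → Bool) (k : Fin N) : |sgnVec s k| = 1 := by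
  cases h : s k <;> simp [sgnVec, h]

lemma abs_add_eq_of_abs_lt {a e : ℝ} (h : |e| < |a|) : |a + e| = |a| + Real.sign a * e := by
  rcases lt_trichotomy a 0 with ha | rfl | ha
  · rw [abs_of_neg ha] at h ⊢
    rw [Real.sign_of_neg ha, abs_of_neg (by linarith [le_abs_self e])]
    ring
  · exact absurd h (by simp)
  · rw [abs_of_pos ha] at h ⊢
    rw [Real.sign_of_pos ha, abs_of_pos (by linarith [neg_abs_le e])]
    ring

lemma d1_add_add {p q u v : Fin N → ℝ} (h : ∀ k, |u k - v k| < |p k - q k|) :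
    d1 (p + u) (q + v) = d1 p q + signDiff p q ⬝ᵥ (u - v) := by
  simp only [d1, dotProduct, ← Finset.sum_add_distrib, Pi.add_apply, Pi.sub_apply, signDiff]
  refine Finset.sum_congr rfl fun k _ => ?_
  rw [show p k + u k - (q k + v k) = p k - q k + (u k - v k) by ring, abs_add_eq_of_abs_lt (h k)]

lemma d1Inf_cube {p y : Fin N → ℝ} {r : ℝ} (hr : 0 ≤ r) (hy : ∀ k, r ≤ |p k - y k|) :
    d1Inf (cube p r) y = d1 p y - N * r := by
  have hcoord : ∀ k, |p k - r * Real.sign (p k - y k) - y k| = |p k - y k| - r := fun k => by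
    rcases lt_trichotomy (p k - y k) 0 with h | h | h
    · have := hy k; rw [abs_of_neg h] at this ⊢
      rw [Real.sign_of_neg h, abs_of_nonpos (by linarith)]; ring
    · have := hy k; rw [h, abs_zero] at this
      rw [h, Real.sign_zero, show r = 0 by linarith]; simp [sub_eq_zero.1 h]
    · have := hy k; rw [abs_of_pos h] at this ⊢
      rw [Real.sign_of_pos h, abs_of_nonneg (by linarith)]; ring
  refine IsLeast.csInf_eq ⟨⟨fun k => p k - r * Real.sign (p k - y k), fun k => ?_, ?_⟩, ?_⟩
  · simp only [Set.mem_Icc]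
    rcases Real.sign_apply_eq (p k - y k) with h | h | h <;> rw [h] <;> constructor <;> linarith
  · simp only [d1, hcoord, Finset.sum_sub_distrib, Finset.sum_const, Finset.card_univ,
      Fintype.card_fin, nsmul_eq_mul]
  · rintro _ ⟨z, hz, rfl⟩
    have hcoord' : ∀ k, |p k - y k| - r ≤ |z k - y k| := fun k => by
      have hzk : p k - r ≤ z k ∧ z k ≤ p k + r := hz k
      have := abs_sub_le (p k) (z k) (y k)
      have : |p k - z k| ≤ r := abs_sub_le_iff.2 ⟨by linarith [hzk.1], by linarith [hzk.2]⟩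
      linarith
    calc d1 p y - N * r = ∑ k, (|p k - y k| - r) := by
          simp [d1, Finset.sum_sub_distrib]
      _ ≤ d1 z y := Finset.sum_le_sum fun k _ => hcoord' k

variable {p q : Fin N → ℝ} {r : ℝ}

lemma d1_vertex_vertex (hr : 0 ≤ r) (hsep : ∀ k, 2 * r < |p k - q k|) (s t : Fin N → Bool) :
    d1 (p + r • sgnVec s) (q + r • sgnVec t) =
      d1 p q + r * (signDiff p q ⬝ᵥ sgnVec s) - r * (signDiff p q ⬝ᵥ sgnVec t) := by
  rw [d1_add_add fun k => ?_, ← smul_sub, dotProduct_smul, dotProduct_sub, smul_eq_mul]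
  · ring
  · calc |(r • sgnVec s) k - (r • sgnVec t) k| ≤ |r * sgnVec s k| + |r * sgnVec t k| :=
          abs_sub _ _
      _ = 2 * r := by simp [abs_mul, abs_sgnVec, abs_of_nonneg hr]; ring
      _ < |p k - q k| := hsep k

lemma d1_vertex_vertex_self (hr : 0 ≤ r) (s t : Fin N → Bool) :
    d1 (q + r • sgnVec s) (q + r • sgnVec t) = N * r - r * (sgnVec s ⬝ᵥ sgnVec t) := by
  have hcoord : ∀ k, |(q + r • sgnVec s) k - (q + r • sgnVec t) k| =
      r - r * (sgnVec s k * sgnVec t k) := fun k => by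
    have hst : |sgnVec s k - sgnVec t k| = 1 - sgnVec s k * sgnVec t k := by
      simp only [sgnVec]
      cases s k <;> cases t k <;> norm_num
    rw [show (q + r • sgnVec s) k - (q + r • sgnVec t) k = r * (sgnVec s k - sgnVec t k) by
      simp only [Pi.add_apply, Pi.smul_apply, smul_eq_mul]; ring, abs_mul, abs_of_nonneg hr, hst]
    ring
  rw [d1, Finset.sum_congr rfl fun k _ => hcoord k]
  simp [dotProduct, Finset.sum_sub_distrib, Finset.mul_sum]

lemma d1Inf_cube_vertex (hr : 0 ≤ r) (hsep : ∀ k, 2 * r < |p k - q k|) (t : Fin N → Bool) :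
    d1Inf (cube p r) (q + r • sgnVec t) =
      d1 p q - r * (signDiff p q ⬝ᵥ sgnVec t) - N * r := by
  have hcoord : ∀ k, |(r • sgnVec t) k| = r := fun k => by
    simp [abs_mul, abs_sgnVec, abs_of_nonneg hr]
  have hcenter : d1 p (q + r • sgnVec t) = d1 p q - r * (signDiff p q ⬝ᵥ sgnVec t) := by
    simpa [sub_eq_add_neg] using d1_add_add (p := p) (q := q) (u := 0) (v := r • sgnVec t)
      fun k => by rw [Pi.zero_apply, zero_sub, abs_neg, hcoord]; linarith [hsep k]
  rw [d1Inf_cube hr fun k => ?_, hcenter]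
  have := abs_sub_abs_le_abs_sub (p k - q k) ((r • sgnVec t) k)
  rw [hcoord, sub_sub] at this
  rw [Pi.add_apply]
  linarith [hsep k]

end CubeGeometry

section VertexSystemSolution

variable {N : ℕ}

/-- The cube at `p` with vertex masses `α p` contributes
`exp (-d1 p q) * exp (r * (signDiff p q ⬝ᵥ sgnVec t)) * apparentMass r α p q`
to the equation of the Vertex System at the vertex `q + r • sgnVec t`. -/
noncomputable def apparentMass (r : ℝ) (α : (Fin N → ℝ) → (Fin N → Bool) → ℝ)
    (p q : Fin N → ℝ) : ℝ :=
  ∑ s, Real.exp (-(r * (signDiff p q ⬝ᵥ sgnVec s))) * α p s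

lemma apparentMass_self (r : ℝ) (α : (Fin N → ℝ) → (Fin N → Bool) → ℝ) (p : Fin N → ℝ) :
    apparentMass r α p p = ∑ s, α p s := by
  have h0 : signDiff p p = 0 := funext fun k => by simp [signDiff]
  simp [apparentMass, h0]

noncomputable def coupling (r : ℝ) (p q q' : Fin N → ℝ) : ℝ :=
  Real.exp (-d1 p q) * Real.exp (N * r) * Real.exp (-(r * (signDiff q q' ⬝ᵥ signDiff p q)))

variable {F : Finset (Fin N → ℝ)} {r : ℝ} {α : (Fin N → ℝ) → (Fin N → Bool) → ℝ}

lemma vecMul_cubeKernel_of_vertexSystem (hr : 0 < r)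
    (hskew : ENNReal.ofReal (2 * r) < skewness (F : Set (Fin N → ℝ))) (hα : VertexSystem F r α)
    {q : Fin N → ℝ} (hq : q ∈ F) :
    α q ᵥ* cubeKernel (Real.exp (-(2 * r))) = fun t => ∑ p ∈ F.erase q,
      Real.exp (-d1 p q) * Real.exp (r * (signDiff p q ⬝ᵥ sgnVec t)) *
        (Real.exp (N * r) - apparentMass r α p q) := by
  ext t
  have hsep : ∀ p ∈ F.erase q, ∀ k, 2 * r < |p k - q k| := fun p hp =>
    lt_abs_sub_of_ofReal_lt_skewness hskew (Finset.mem_of_mem_erase hp) hq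
      (Finset.ne_of_mem_erase hp)
  have hsys := hα q hq t
  rw [← Finset.add_sum_erase F _ hq] at hsys
  have hself : ∑ s, α q s * Real.exp (-d1 (q + r • sgnVec s) (q + r • sgnVec t)) =
      (α q ᵥ* cubeKernel (Real.exp (-(2 * r)))) t := by
    simp only [vecMul, dotProduct, cubeKernel_exp, d1_vertex_vertex_self hr.le]
  have hother : ∀ p ∈ F.erase q,
      ∑ s, α p s * Real.exp (-d1 (p + r • sgnVec s) (q + r • sgnVec t)) =
        Real.exp (-d1 p q) * Real.exp (r * (signDiff p q ⬝ᵥ sgnVec t)) *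
          apparentMass r α p q := fun p hp => by
    rw [apparentMass, Finset.mul_sum]
    refine Finset.sum_congr rfl fun s _ => ?_
    rw [d1_vertex_vertex hr.le (hsep p hp), mul_comm, mul_left_comm, ← mul_assoc,
      ← Real.exp_add, ← Real.exp_add]
    congr 2
    ring
  have hrhs : ∀ p ∈ F.erase q, Real.exp (-d1Inf (cube p r) (q + r • sgnVec t)) =
      Real.exp (-d1 p q) * Real.exp (r * (signDiff p q ⬝ᵥ sgnVec t)) *
        Real.exp (N * r) := fun p hp => by
    rw [d1Inf_cube_vertex hr.le (hsep p hp), ← Real.exp_add, ← Real.exp_add]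
    congr 1
    ring
  rw [hself, Finset.sum_congr rfl hother, Finset.sum_congr rfl hrhs] at hsys
  rw [eq_sub_of_add_eq hsys, ← Finset.sum_sub_distrib]
  exact Finset.sum_congr rfl fun p _ => by ring

/- The cube kernel is invertible, and the right-hand side of the Vertex System at `q` is a
combination of its rows `towards p q`. -/
lemma eq_sum_single_of_vertexSystem (hr : 0 < r)
    (hskew : ENNReal.ofReal (2 * r) < skewness (F : Set (Fin N → ℝ))) (hα : VertexSystem F r α)
    {q : Fin N → ℝ} (hq : q ∈ F) :
    α q = ∑ p ∈ F.erase q, (Real.exp (-d1 p q) * Real.exp (N * r) *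
      (Real.exp (N * r) - apparentMass r α p q)) • Pi.single (towards p q) 1 := by
  have hρ : Real.exp (-(2 * r)) ^ 2 ≠ 1 :=
    (pow_lt_one₀ (Real.exp_pos _).le (Real.exp_lt_one_iff.2 (by linarith)) two_ne_zero).ne
  apply vecMul_cubeKernel_injective hρ
  dsimp only
  rw [vecMul_cubeKernel_of_vertexSystem hr hskew hα hq, sum_vecMul]
  ext t
  rw [Finset.sum_apply]
  refine Finset.sum_congr rfl fun p hp => ?_
  have hne := apply_ne_of_ofReal_lt_skewness hskew (Finset.mem_of_mem_erase hp) hq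
    (Finset.ne_of_mem_erase hp)
  rw [smul_vecMul, single_one_vecMul, Pi.smul_apply, row_apply, cubeKernel_exp,
    sgnVec_towards hne, smul_eq_mul, neg_sub, Real.exp_sub]
  field_simp

lemma apparentMass_eq_of_vertexSystem (hr : 0 < r)
    (hskew : ENNReal.ofReal (2 * r) < skewness (F : Set (Fin N → ℝ))) (hα : VertexSystem F r α)
    {q : Fin N → ℝ} (hq : q ∈ F)
    (q' : Fin N → ℝ) :
    apparentMass r α q q' =
      ∑ p ∈ F.erase q, coupling r p q q' * (Real.exp (N * r) - apparentMass r α p q) := by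
  have hdot : apparentMass r α q q' =
      (fun s => Real.exp (-(r * (signDiff q q' ⬝ᵥ sgnVec s)))) ⬝ᵥ α q := rfl
  rw [hdot, eq_sum_single_of_vertexSystem hr hskew hα hq, dotProduct_sum]
  refine Finset.sum_congr rfl fun p hp => ?_
  have hne := apply_ne_of_ofReal_lt_skewness hskew (Finset.mem_of_mem_erase hp) hq
    (Finset.ne_of_mem_erase hp)
  rw [dotProduct_smul, dotProduct_single, sgnVec_towards hne, smul_eq_mul, coupling]
  ring

end VertexSystemSolution

section ReducedSystem

variable {N : ℕ} (F : Finset (Fin N → ℝ))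

noncomputable def couplingMatrix (r : ℝ) : Matrix (F × F) (F × F) ℝ :=
  of fun x y => if y.2 = x.1 ∧ y.1 ≠ x.1 then coupling r (y.1 : Fin N → ℝ) x.1 x.2 else 0

noncomputable def couplingRhs (r : ℝ) : F × F → ℝ :=
  fun x => ∑ p ∈ Finset.univ.erase x.1, coupling r (p : Fin N → ℝ) x.1 x.2 * Real.exp (N * r)

lemma couplingMatrix_mulVec (r : ℝ) (v : F × F → ℝ) (x : F × F) :
    (couplingMatrix F r *ᵥ v) x =
      ∑ p ∈ Finset.univ.erase x.1, coupling r (p : Fin N → ℝ) x.1 x.2 * v (p, x.1) := by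
  simp only [mulVec, dotProduct, couplingMatrix, of_apply, ite_mul, zero_mul,
    Fintype.sum_prod_type, ite_and, Finset.sum_ite_eq', Finset.mem_univ, if_true]
  rw [← Finset.sum_filter, Finset.filter_ne']

lemma coupling_zero (p q q' : Fin N → ℝ) : coupling 0 p q q' = Real.exp (-d1 p q) := by
  simp [coupling]

lemma continuous_couplingMatrix : Continuous (couplingMatrix F) := by
  refine continuous_pi fun x => continuous_pi fun y => ?_
  simp only [couplingMatrix, of_apply]
  split_ifs
  · unfold coupling
    fun_prop
  · exact continuous_const

lemma continuous_couplingRhs : Continuous (couplingRhs F) := by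
  refine continuous_pi fun x => ?_
  unfold couplingRhs coupling
  fun_prop

lemma one_add_couplingMatrix_mulVec_apparentMass {r : ℝ}
    {α : (Fin N → ℝ) → (Fin N → Bool) → ℝ} (hr : 0 < r)
    (hskew : ENNReal.ofReal (2 * r) < skewness (F : Set (Fin N → ℝ)))
    (hα : VertexSystem F r α) :
    (1 + couplingMatrix F r) *ᵥ (fun x => apparentMass r α x.1 x.2) = couplingRhs F r := by
  ext x
  rw [add_mulVec, one_mulVec, Pi.add_apply, couplingMatrix_mulVec, couplingRhs,
    apparentMass_eq_of_vertexSystem hr hskew hα x.1.2, Finset.sum_erase_eq_sum_univ_erase x.1,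
    ← Finset.sum_add_distrib]
  exact Finset.sum_congr rfl fun p _ => by ring

lemma one_add_couplingMatrix_zero_mulVec {w : (Fin N → ℝ) → ℝ}
    (hw : ∀ p ∈ F, ∑ q ∈ F, Real.exp (-d1 p q) * w q = 1) :
    (1 + couplingMatrix F 0) *ᵥ (fun x => 1 - w x.1) = couplingRhs F 0 := by
  ext x
  have h := hw x.1 x.1.2
  rw [← Finset.add_sum_erase F _ x.1.2, d1_self, Finset.sum_erase_eq_sum_univ_erase x.1] at h
  simp only [add_mulVec, one_mulVec, Pi.add_apply, couplingMatrix_mulVec, couplingRhs,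
    coupling_zero, mul_zero, Real.exp_zero, mul_one, mul_sub, Finset.sum_sub_distrib]
  simp only [d1_comm _ (x.1 : Fin N → ℝ), neg_zero, Real.exp_zero, one_mul] at h ⊢
  linarith

lemma isUnit_one_add_couplingMatrix_zero
    (hF : ∀ k, Function.Injective fun p : F => (p : Fin N → ℝ) k) :
    IsUnit (1 + couplingMatrix F 0) := by
  rw [← mulVec_injective_iff_isUnit]
  refine (injective_iff_map_eq_zero (1 + couplingMatrix F 0).mulVecLin).2 fun v hv => ?_
  have hrow : ∀ x : F × F,
      v x + ∑ p ∈ Finset.univ.erase x.1, Real.exp (-d1 (p : Fin N → ℝ) x.1) * v (p, x.1) = 0 :=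
    fun x => by
      have h := congrFun hv x
      rwa [mulVecLin_apply, add_mulVec, one_mulVec, Pi.add_apply, couplingMatrix_mulVec,
        Pi.zero_apply, Finset.sum_congr rfl fun p _ => by rw [coupling_zero]] at h
  have hdiag : ∀ x : F × F, v x = v (x.1, x.1) := fun x => by
    linarith [hrow x, hrow (x.1, x.1)]
  have hker : (of fun p q : F => Real.exp (-d1 (p : Fin N → ℝ) q)) *ᵥ (fun q => v (q, q)) = 0 := by
    ext q
    rw [Pi.zero_apply, ← hrow (q, q), mulVec, dotProduct,
      ← Finset.add_sum_erase _ _ (Finset.mem_univ q)]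
    simp only [of_apply, d1_self, neg_zero, Real.exp_zero, one_mul]
    congr 1
    exact Finset.sum_congr rfl fun p _ => by rw [d1_comm, ← hdiag (p, q)]
  have hzero := mulVec_injective_iff_isUnit.2 (posDef_exp_neg_d1 hF).isUnit
    (hker.trans (mulVec_zero _).symm)
  ext x
  rw [hdiag x]
  exact congrFun hzero x.1

end ReducedSystem

theorem tendsto_apparentMass {N : ℕ} (F : Finset (Fin N → ℝ))
    (hskew : IsSkew (F : Set (Fin N → ℝ))) {w : (Fin N → ℝ) → ℝ}
    (hw : ∀ p ∈ F, ∑ q ∈ F, Real.exp (-d1 p q) * w q = 1)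
    {α : ℝ → (Fin N → ℝ) → (Fin N → Bool) → ℝ}
    (hα : ∀ r : ℝ, 0 < r → ENNReal.ofReal (2 * r) < skewness (F : Set (Fin N → ℝ)) →
      VertexSystem F r (α r)) :
    Tendsto (fun r (x : F × F) => apparentMass r (α r) x.1 x.2) (𝓝[>] 0)
      (𝓝 fun x => 1 - w x.1) := by
  have hM : Tendsto (fun r => 1 + couplingMatrix F r) (𝓝[>] 0) (𝓝 (1 + couplingMatrix F 0)) :=
    ((continuous_const.add (continuous_couplingMatrix F)).tendsto 0).mono_left nhdsWithin_le_nhds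
  have hb : Tendsto (couplingRhs F) (𝓝[>] 0) (𝓝 (couplingRhs F 0)) :=
    ((continuous_couplingRhs F).tendsto 0).mono_left nhdsWithin_le_nhds
  exact tendsto_of_mulVec_eq (M := fun r => 1 + couplingMatrix F r) hM hb
    (isUnit_one_add_couplingMatrix_zero F hskew.injective_apply)
    (one_add_couplingMatrix_zero_mulVec F hw)
    ((eventually_pos_and_ofReal_two_mul_lt hskew).mono fun r hr =>
      one_add_couplingMatrix_mulVec_apparentMass F hr.1 hr.2 (hα r hr.1 hr.2))

theorem stmt13_general {N : ℕ} (F : Finset (Fin N → ℝ))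
    (hskew : IsSkew (F : Set (Fin N → ℝ)))
    -- `w` is the weighting of `F` (with respect to the 1-metric),
    -- so that `mg F = ∑ p ∈ F, w p`
    (w : (Fin N → ℝ) → ℝ)
    (hw : ∀ p ∈ F, ∑ q ∈ F, Real.exp (-d1 p q) * w q = 1)
    -- `α r` is the (unique) solution of the Vertex System for each admissible `r`
    (α : ℝ → (Fin N → ℝ) → (Fin N → Bool) → ℝ)
    (hα : ∀ r : ℝ, 0 < r → ENNReal.ofReal (2 * r) < skewness (F : Set (Fin N → ℝ)) →
      VertexSystem F r (α r)) :
    (∀ p ∈ F, Tendsto (fun r => ∑ s : Fin N → Bool, α r p s) (𝓝[>] 0)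
      (𝓝 (1 - w p))) ∧
    Tendsto (fun r => ∑ p ∈ F, ∑ s : Fin N → Bool, α r p s) (𝓝[>] 0)
      (𝓝 ((F.card : ℝ) - ∑ p ∈ F, w p)) := by
  have hmass : ∀ p ∈ F, Tendsto (fun r => ∑ s, α r p s) (𝓝[>] 0) (𝓝 (1 - w p)) :=
    fun p hp => by
      have h := ((continuous_apply ((⟨p, hp⟩, ⟨p, hp⟩) : F × F)).tendsto _).comp
        (tendsto_apparentMass F hskew hw hα)
      simp only [Function.comp_def, apparentMass_self] at h
      exact h
  refine ⟨hmass, ?_⟩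
  have h := tendsto_finsetSum F hmass
  rwa [Finset.sum_sub_distrib, Finset.sum_const, nsmul_one] at h

theorem stmt13 {N : ℕ} (F : Finset (Fin N → ℝ)) (hF : F.Nonempty)
    (hskew : IsSkew (F : Set (Fin N → ℝ)))
    -- `w` is the weighting of `F` (with respect to the 1-metric),
    -- so that `mg F = ∑ p ∈ F, w p`
    (w : (Fin N → ℝ) → ℝ)
    (hw : ∀ p ∈ F, ∑ q ∈ F, Real.exp (-d1 p q) * w q = 1)
    -- `α r` is the (unique) solution of the Vertex System for each admissible `r`
    (α : ℝ → (Fin N → ℝ) → (Fin N → Bool) → ℝ)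
    (hα : ∀ r : ℝ, 0 < r → ENNReal.ofReal (2 * r) < skewness (F : Set (Fin N → ℝ)) →
      VertexSystem F r (α r)) :
    (∀ p ∈ F, Tendsto (fun r => ∑ s : Fin N → Bool, α r p s) (𝓝[>] 0)
      (𝓝 (1 - w p))) ∧
    Tendsto (fun r => ∑ p ∈ F, ∑ s : Fin N → Bool, α r p s) (𝓝[>] 0)
      (𝓝 ((F.card : ℝ) - ∑ p ∈ F, w p)) :=
  stmt13_general F hskew w hw α hα
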